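/- Let Q1 be a self-join-free conjunctive query, Q2 a conjunctive query, and Q1^+ an extension of Q1 obtained by repeatedly adding edges (atoms) whose variable sets are connected subsets of the hypergraph of Q1 contained in h(free(Q2)) (where h is the unique body-homomorphism from Q2 to Q1). If there is a path between vertices u and w in the hypergraph of Q1^+, then there is a simple chordless path between u and w in the hypergraph of Q1 using only vertices that appear on the Q1^+-path or lie in h(free(Q2)). -/

import Mathlib

/-!
Work in the primal graph of `Q1` restricted to the vertices of the given path together with
`W`. Each step of the `Q1⁺`-path stays connected there: an original edge is an edge of that
graph, and an added edge is connected in `Q1` inside `W`. A shortest walk between `u` and `w`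
in this graph is then simple, and it is chordless because a chord would shorten it.
-/

def HAdj {V : Type*} (H : Set (Set V)) (a b : V) : Prop :=
  a ≠ b ∧ ∃ e ∈ H, a ∈ e ∧ b ∈ e

def HIsPathOn {V : Type*} (H : Set (Set V)) (p : ℕ → V) (k : ℕ) : Prop :=
  ∀ i, i + 1 < k → HAdj H (p i) (p (i + 1))

def SimpleOn {V : Type*} (p : ℕ → V) (k : ℕ) : Prop :=
  ∀ i j, i < k → j < k → p i = p j → i = j

def HChordlessOn {V : Type*} (H : Set (Set V)) (p : ℕ → V) (k : ℕ) : Prop :=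
  ∀ i j, j < k → i + 1 < j → ¬ HAdj H (p i) (p j)

/-- A set `S` of vertices is connected within the hypergraph `H1`: any two of
its vertices are joined by a path of `H1` staying inside `S`. -/
def ConnectedIn {V : Type*} (H1 : Set (Set V)) (S : Set V) : Prop :=
  ∀ x ∈ S, ∀ y ∈ S, ∃ (p : ℕ → V) (m : ℕ), 1 ≤ m ∧ HIsPathOn H1 p m ∧
    (∀ i, i < m → p i ∈ S) ∧ p 0 = x ∧ p (m - 1) = y

lemma HAdj.symm {V : Type*} {H : Set (Set V)} {a b : V} (h : HAdj H a b) : HAdj H b a :=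
  let ⟨hne, e, he, ha, hb⟩ := h
  ⟨hne.symm, e, he, hb, ha⟩

def primalGraphOn {V : Type*} (H : Set (Set V)) (S : Set V) : SimpleGraph V where
  Adj a b := HAdj H a b ∧ a ∈ S ∧ b ∈ S
  symm := ⟨fun _ _ h => ⟨h.1.symm, h.2.2, h.2.1⟩⟩
  loopless := ⟨fun _ h => h.1.1 rfl⟩

lemma primalGraphOn_adj {V : Type*} {H : Set (Set V)} {S : Set V} {a b : V} :
    (primalGraphOn H S).Adj a b ↔ HAdj H a b ∧ a ∈ S ∧ b ∈ S :=
  Iff.rfl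

namespace SimpleGraph

lemma reachable_of_forall_reachable_succ {V : Type*} {G : SimpleGraph V} (p : ℕ → V) :
    ∀ n, (∀ i < n, G.Reachable (p i) (p (i + 1))) → G.Reachable (p 0) (p n)
  | 0, _ => .rfl
  | n + 1, h =>
    (reachable_of_forall_reachable_succ p n fun i hi => h i (by omega)).trans (h n (by omega))

lemma Walk.not_adj_getVert_of_length_eq_dist {V : Type*} {G : SimpleGraph V} {u v : V}
    (p : G.Walk u v) (hp : p.length = G.dist u v) {i j : ℕ} (hij : i + 1 < j)
    (hj : j ≤ p.length) : ¬ G.Adj (p.getVert i) (p.getVert j) := by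
  intro hadj
  have hshort := dist_le ((p.take i).append (.cons hadj (p.drop j)))
  simp only [length_append, length_cons, take_length, drop_length] at hshort
  omega

end SimpleGraph

section

variable {V : Type*} {H : Set (Set V)} {S : Set V}

lemma reachable_primalGraphOn_of_hIsPathOn {p : ℕ → V} {m : ℕ} (hm : 1 ≤ m)
    (hp : HIsPathOn H p m) (hS : ∀ i < m, p i ∈ S) :
    (primalGraphOn H S).Reachable (p 0) (p (m - 1)) :=
  SimpleGraph.reachable_of_forall_reachable_succ p (m - 1) fun i hi =>
    (primalGraphOn_adj.mpr ⟨hp i (by omega), hS i (by omega), hS (i + 1) (by omega)⟩).reachable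

lemma ConnectedIn.reachable_primalGraphOn {e : Set V} (he : ConnectedIn H e) (heS : e ⊆ S)
    {x y : V} (hx : x ∈ e) (hy : y ∈ e) : (primalGraphOn H S).Reachable x y := by
  obtain ⟨p, m, hm, hp, hpe, rfl, rfl⟩ := he x hx y hy
  exact reachable_primalGraphOn_of_hIsPathOn hm hp fun i hi => heS (hpe i hi)

lemma getVert_mem_of_primalGraphOn_walk {u v : V} (p : (primalGraphOn H S).Walk u v) (hu : u ∈ S)
    {i : ℕ} (hi : i ≤ p.length) : p.getVert i ∈ S := by
  rcases i with _ | i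
  · rwa [p.getVert_zero]
  · exact (primalGraphOn_adj.mp (p.adj_getVert_succ (i := i) (by omega))).2.2

lemma exists_chordless_path_of_reachable_primalGraphOn {u w : V}
    (hreach : (primalGraphOn H S).Reachable u w) (hu : u ∈ S) :
    ∃ (q : ℕ → V) (l : ℕ), 1 ≤ l ∧
      HIsPathOn H q l ∧ SimpleOn q l ∧ HChordlessOn H q l ∧
      q 0 = u ∧ q (l - 1) = w ∧ ∀ i, i < l → q i ∈ S := by
  obtain ⟨p, hpath, hlen⟩ := hreach.exists_path_of_dist
  have hmem : ∀ i < p.length + 1, p.getVert i ∈ S := fun i hi =>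
    getVert_mem_of_primalGraphOn_walk p hu (by omega)
  refine ⟨p.getVert, p.length + 1, by omega,
    fun i hi => (primalGraphOn_adj.mp (p.adj_getVert_succ (i := i) (by omega))).1,
    fun i j hi hj hij => hpath.getVert_injOn (by simp; omega) (by simp; omega) hij,
    fun i j hj hij hadj => ?_, p.getVert_zero, p.getVert_length, hmem⟩
  exact p.not_adj_getVert_of_length_eq_dist hlen hij (by omega)
    (primalGraphOn_adj.mpr ⟨hadj, hmem i (by omega), hmem j hj⟩)

end

/-- Let `H1` be the hypergraph of `Q1` and `H2` that of an extension `Q1⁺`,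
where every hyperedge of `H2` is either an original hyperedge of `H1` or a set
of vertices connected in `H1` and contained in `W = h(free(Q2))`. Then every
path in `H2` between `u` and `w` yields a simple chordless path in `H1`
between `u` and `w` using only vertices of the original path or of `W`. -/
theorem extension_path_to_original_chordless_path
    {V : Type*} (H1 H2 : Set (Set V)) (W : Set V)
    (hext : ∀ e ∈ H2, e ∈ H1 ∨ (e ⊆ W ∧ ConnectedIn H1 e))
    (u w : V) (p : ℕ → V) (m : ℕ) (hm : 1 ≤ m)
    (hp : HIsPathOn H2 p m) (h0 : p 0 = u) (hlast : p (m - 1) = w) :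
    ∃ (q : ℕ → V) (l : ℕ), 1 ≤ l ∧
      HIsPathOn H1 q l ∧ SimpleOn q l ∧ HChordlessOn H1 q l ∧
      q 0 = u ∧ q (l - 1) = w ∧
      ∀ i, i < l → (∃ j, j < m ∧ q i = p j) ∨ q i ∈ W := by
  set S : Set V := {v | (∃ j, j < m ∧ v = p j) ∨ v ∈ W}
  have hpS : ∀ i < m, p i ∈ S := fun i hi => Or.inl ⟨i, hi, rfl⟩
  have hstep : ∀ i < m - 1, (primalGraphOn H1 S).Reachable (p i) (p (i + 1)) := by
    intro i hi
    obtain ⟨hne, e, he, hpi, hpi'⟩ := hp i (by omega)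
    rcases hext e he with he1 | ⟨heW, hconn⟩
    · exact (primalGraphOn_adj.mpr
        ⟨⟨hne, e, he1, hpi, hpi'⟩, hpS i (by omega), hpS (i + 1) (by omega)⟩).reachable
    · exact hconn.reachable_primalGraphOn (fun v hv => Or.inr (heW hv)) hpi hpi'
  have hreach := SimpleGraph.reachable_of_forall_reachable_succ p (m - 1) hstep
  rw [h0, hlast] at hreach
  exact exists_chordless_path_of_reachable_primalGraphOn hreach (h0 ▸ hpS 0 (by omega))
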